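/- arXiv:2301.07229 — 7 statements merged into one kernel-verified Lean document; each statement's English description precedes it below -/
import Mathlib

section
/- Let X₁,…,Xₙ (n ≥ 2) be real-valued random variables on a common probability space, each with finite second moment, with means μᵢ = E[Xᵢ], standard deviations σᵢ = √Var(Xᵢ), and correlations ρ_{i,j} = Corr(Xᵢ, Xⱼ) (assuming σᵢ > 0 for all i). Then the Gini mean difference satisfies GMDₙ ≤ (1/C(n,2)) Σ_{1≤i<j≤n} [ √((σᵢ − σⱼρ_{i,j})² + σⱼ²(1 − ρ_{i,j}²)) + |μᵢ − μⱼ| ]. -/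
/-!
Termwise: `E|Xᵢ - Xⱼ| ≤ √Var(Xᵢ - Xⱼ) + |μᵢ - μⱼ|`, since the mean absolute deviation of a
square-integrable variable is at most its standard deviation (Jensen, or `Var |Z - E Z| ≥ 0`).
The right-hand side of the theorem is this bound, with
`Var(Xᵢ - Xⱼ) = σᵢ² - 2ρᵢⱼσᵢσⱼ + σⱼ² = (σᵢ - σⱼρᵢⱼ)² + σⱼ²(1 - ρᵢⱼ²)`.
-/

open MeasureTheory ProbabilityTheory Real

namespace ProbabilityTheory

variable {Ω : Type*} [MeasurableSpace Ω] {P : Measure Ω} [IsProbabilityMeasure P]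

lemma integral_abs_sub_integral_le_sqrt_variance {Z : Ω → ℝ} (hZ : MemLp Z 2 P) :
    ∫ ω, |Z ω - P[Z]| ∂P ≤ √(Var[Z; P]) := by
  set Y : Ω → ℝ := fun ω ↦ |Z ω - P[Z]|
  have hY : MemLp Y 2 P := (hZ.sub (memLp_const _)).abs
  have hY_sq : P[Y ^ 2] = Var[Z; P] := by
    simp only [Y, Pi.pow_apply, sq_abs]
    exact (variance_eq_integral hZ.aemeasurable).symm
  have h := variance_nonneg Y P
  rw [variance_eq_sub hY, hY_sq, sub_nonneg] at h
  exact le_sqrt_of_sq_le h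

lemma integral_abs_le_sqrt_variance_add_abs_integral {Z : Ω → ℝ} (hZ : MemLp Z 2 P) :
    ∫ ω, |Z ω| ∂P ≤ √(Var[Z; P]) + |P[Z]| := by
  have hdev : Integrable (fun ω ↦ |Z ω - P[Z]|) P :=
    ((hZ.sub (memLp_const _)).integrable one_le_two).abs
  calc ∫ ω, |Z ω| ∂P ≤ ∫ ω, (|Z ω - P[Z]| + |P[Z]|) ∂P :=
        integral_mono (hZ.integrable one_le_two).abs (hdev.add (integrable_const _))
          fun ω ↦ sub_le_iff_le_add.mp (abs_sub_abs_le_abs_sub (Z ω) (P[Z]))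
    _ = ∫ ω, |Z ω - P[Z]| ∂P + |P[Z]| := by simp [integral_add hdev (integrable_const _)]
    _ ≤ √(Var[Z; P]) + |P[Z]| := by
        gcongr; exact integral_abs_sub_integral_le_sqrt_variance hZ

lemma integral_abs_sub_le_of_covariance_eq {X Y : Ω → ℝ} (hX : MemLp X 2 P) (hY : MemLp Y 2 P)
    {σX σY ρ : ℝ} (hσX : σX = √(Var[X; P])) (hσY : σY = √(Var[Y; P]))
    (hcov : cov[X, Y; P] = ρ * (σX * σY)) :
    ∫ ω, |X ω - Y ω| ∂P ≤ √((σX - σY * ρ) ^ 2 + σY ^ 2 * (1 - ρ ^ 2)) + |P[X] - P[Y]| := by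
  have hvar : Var[X - Y; P] = (σX - σY * ρ) ^ 2 + σY ^ 2 * (1 - ρ ^ 2) := by
    rw [variance_sub hX hY, hcov, ← sq_sqrt (variance_nonneg X P),
      ← sq_sqrt (variance_nonneg Y P), ← hσX, ← hσY]
    ring
  have hmean : P[X - Y] = P[X] - P[Y] :=
    integral_sub (hX.integrable one_le_two) (hY.integrable one_le_two)
  have h := integral_abs_le_sqrt_variance_add_abs_integral (hX.sub hY)
  rwa [hvar, hmean] at h

end ProbabilityTheory

theorem gmd_upper_bound_general
    {Ω : Type*} [MeasurableSpace Ω] (P : Measure Ω) [IsProbabilityMeasure P]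
    (n : ℕ) (X : Fin n → Ω → ℝ)
    (hL2 : ∀ i, MemLp (X i) 2 P)
    (μ : Fin n → ℝ) (hμ : ∀ i, μ i = ∫ ω, X i ω ∂P)
    (σ : Fin n → ℝ) (hσ : ∀ i, σ i = Real.sqrt (variance (X i) P))
    (hσpos : ∀ i, 0 < σ i)
    (ρ : Fin n → Fin n → ℝ)
    (hρ : ∀ i j, ρ i j = (∫ ω, (X i ω - μ i) * (X j ω - μ j) ∂P) / (σ i * σ j)) :
    (1 / (n.choose 2 : ℝ)) *
        ∑ i : Fin n, ∑ j : Fin n, (if i < j then ∫ ω, |X i ω - X j ω| ∂P else 0)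
      ≤ (1 / (n.choose 2 : ℝ)) *
        ∑ i : Fin n, ∑ j : Fin n,
          (if i < j then
            Real.sqrt ((σ i - σ j * ρ i j) ^ 2 + (σ j) ^ 2 * (1 - (ρ i j) ^ 2))
              + |μ i - μ j|
          else 0) := by
  have hcov : ∀ i j, cov[X i, X j; P] = ρ i j * (σ i * σ j) := fun i j ↦ by
    rw [hρ, div_mul_cancel₀ _ (mul_pos (hσpos i) (hσpos j)).ne', covariance, ← hμ, ← hμ]
  gcongr with i _ j _
  split_ifs
  · rw [hμ i, hμ j]
    exact integral_abs_sub_le_of_covariance_eq (hL2 i) (hL2 j) (hσ i) (hσ j) (hcov i j)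
  · rfl

/-- Upper bound for the Gini mean difference in terms of means, standard deviations and
correlations (Theorem 1 of the paper). -/
theorem gmd_upper_bound
    {Ω : Type*} [MeasurableSpace Ω] (P : Measure Ω) [IsProbabilityMeasure P]
    (n : ℕ) (hn : 2 ≤ n) (X : Fin n → Ω → ℝ)
    (hmeas : ∀ i, AEMeasurable (X i) P)
    (hL2 : ∀ i, MemLp (X i) 2 P)
    (μ : Fin n → ℝ) (hμ : ∀ i, μ i = ∫ ω, X i ω ∂P)
    (σ : Fin n → ℝ) (hσ : ∀ i, σ i = Real.sqrt (variance (X i) P))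
    (hσpos : ∀ i, 0 < σ i)
    (ρ : Fin n → Fin n → ℝ)
    (hρ : ∀ i j, ρ i j = (∫ ω, (X i ω - μ i) * (X j ω - μ j) ∂P) / (σ i * σ j)) :
    (1 / (n.choose 2 : ℝ)) *
        ∑ i : Fin n, ∑ j : Fin n, (if i < j then ∫ ω, |X i ω - X j ω| ∂P else 0)
      ≤ (1 / (n.choose 2 : ℝ)) *
        ∑ i : Fin n, ∑ j : Fin n,
          (if i < j then
            Real.sqrt ((σ i - σ j * ρ i j) ^ 2 + (σ j) ^ 2 * (1 - (ρ i j) ^ 2))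
              + |μ i - μ j|
          else 0) :=
  gmd_upper_bound_general P n X hL2 μ hμ σ hσ hσpos ρ hρ
end

section
/- Let X₁ and X₂ be independent and identically distributed real-valued random variables with mean μ₁ and finite variance σ₁² > 0, and let p > 1 be such that the standardized variable Z₁ = (X₁ − μ₁)/σ₁ satisfies E[|Z₁|^p] < ∞. Then E[|X₁ − X₂|] ≤ C_p · σ₁, where C_p = 2 · (E[|Z₁|^p])^{1/p} · ((p−1)/(2p−1))^{(p−1)/p}. -/
/-!
Let `Q` be the quantile function of the common law `ν` of `X₁, X₂`, so that `Q(U) ∼ ν` for `U`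
uniform on `(0,1)`. Since `Q` is monotone, `|Q u - Q v| = sign (u - v) (Q u - Q v)`, and
integrating out `v` turns the Gini mean difference into
`E|X₁ - X₂| = 2 ∫₀¹ (2u - 1) Q(u) du = 2 ∫₀¹ (2u - 1) (Q(u) - μ₁) du`, the weight `2u - 1` having
mean zero. Hölder's inequality with the conjugate exponent `q = p / (p - 1)` bounds this by
`2 ‖X₁ - μ₁‖_p ‖2U - 1‖_q`, and `E|2U - 1|^q = 1 / (q + 1) = (p - 1) / (2p - 1)`.
-/

open MeasureTheory ProbabilityTheory Real Set Filter Topology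

lemma Real.measurable_sign : Measurable Real.sign :=
  Measurable.ite measurableSet_Iio measurable_const
    (Measurable.ite measurableSet_Ioi measurable_const measurable_const)

namespace ProbabilityTheory

noncomputable def uniformIoo : Measure ℝ := volume.restrict (Ioo 0 1)

instance : IsProbabilityMeasure uniformIoo :=
  ⟨by simp [uniformIoo]⟩

instance : NullSingletonClass uniformIoo := by
  unfold uniformIoo; infer_instance

lemma ae_mem_Ioo_uniformIoo : ∀ᵐ u ∂uniformIoo, u ∈ Ioo (0 : ℝ) 1 :=
  ae_restrict_mem measurableSet_Ioo

lemma integral_uniformIoo (f : ℝ → ℝ) : ∫ u, f u ∂uniformIoo = ∫ u in (0 : ℝ)..1, f u := by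
  rw [intervalIntegral.integral_of_le zero_le_one, integral_Ioc_eq_integral_Ioo, uniformIoo]

lemma uniformIoo_Iio {c : ℝ} (hc : c ≤ 1) : uniformIoo (Iio c) = ENNReal.ofReal c := by
  rw [uniformIoo, Measure.restrict_apply measurableSet_Iio, Iio_inter_Ioo, min_eq_left hc,
    Real.volume_Ioo, sub_zero]

lemma uniformIoo_Iic {c : ℝ} (hc : c ≤ 1) : uniformIoo (Iic c) = ENNReal.ofReal c := by
  rw [← uniformIoo_Iio hc, measure_congr Iio_ae_eq_Iic]

lemma uniformIoo_Ioi {c : ℝ} (hc : 0 ≤ c) : uniformIoo (Ioi c) = ENNReal.ofReal (1 - c) := by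
  rw [uniformIoo, Measure.restrict_apply measurableSet_Ioi, Ioi_inter_Ioo, max_eq_left hc,
    Real.volume_Ioo]

/-- Only the values on `(0,1)` matter; elsewhere `sInf` returns junk. -/
noncomputable def quantile (ν : Measure ℝ) (u : ℝ) : ℝ := sInf {x | u ≤ cdf ν x}

section Quantile

variable {ν : Measure ℝ} {u x : ℝ}

lemma nonempty_setOf_le_cdf (h1 : u < 1) : {x | u ≤ cdf ν x}.Nonempty :=
  ((tendsto_cdf_atTop ν).eventually (eventually_ge_nhds h1)).exists

lemma bddBelow_setOf_le_cdf (h0 : 0 < u) : BddBelow {x | u ≤ cdf ν x} := by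
  obtain ⟨x₀, hx₀⟩ := ((tendsto_cdf_atBot ν).eventually (eventually_lt_nhds h0)).exists
  exact ⟨x₀, fun y hy => le_of_not_gt fun hyx => (hy.trans (monotone_cdf ν hyx.le)).not_gt hx₀⟩

lemma le_cdf_quantile (h1 : u < 1) : u ≤ cdf ν (quantile ν u) := by
  refine ge_of_tendsto (((cdf ν).right_continuous _).tendsto.mono_left
    (nhdsWithin_mono _ Ioi_subset_Ici_self)) ?_
  filter_upwards [self_mem_nhdsWithin] with y hy
  obtain ⟨s, hs, hsy⟩ := exists_lt_of_csInf_lt (nonempty_setOf_le_cdf h1) hy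
  exact hs.trans (monotone_cdf ν hsy.le)

lemma quantile_le_iff (h0 : 0 < u) (h1 : u < 1) : quantile ν u ≤ x ↔ u ≤ cdf ν x :=
  ⟨fun h => (le_cdf_quantile h1).trans (monotone_cdf ν h),
    fun h => csInf_le (bddBelow_setOf_le_cdf h0) h⟩

lemma monotoneOn_quantile : MonotoneOn (quantile ν) (Ioo 0 1) :=
  fun _ ha _ hb hab => (quantile_le_iff ha.1 ha.2).2 (hab.trans (le_cdf_quantile hb.2))

lemma aemeasurable_quantile : AEMeasurable (quantile ν) uniformIoo :=
  aemeasurable_restrict_of_monotoneOn measurableSet_Ioo monotoneOn_quantile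

variable [IsProbabilityMeasure ν]

lemma map_quantile : uniformIoo.map (quantile ν) = ν := by
  refine Measure.ext_of_Iic _ _ fun x => ?_
  have h : quantile ν ⁻¹' Iic x =ᵐ[uniformIoo] Iic (cdf ν x) := by
    filter_upwards [ae_mem_Ioo_uniformIoo] with u hu
    exact propext (quantile_le_iff hu.1 hu.2)
  rw [Measure.map_apply_of_aemeasurable aemeasurable_quantile measurableSet_Iic,
    measure_congr h, uniformIoo_Iic (cdf_le_one ν x), ofReal_cdf]

lemma integral_comp_quantile {g : ℝ → ℝ} (hg : AEStronglyMeasurable g ν) :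
    ∫ u, g (quantile ν u) ∂uniformIoo = ∫ x, g x ∂ν := by
  rw [← map_quantile (ν := ν)] at hg ⊢
  rw [integral_map aemeasurable_quantile hg, map_quantile]

lemma memLp_comp_quantile_iff {g : ℝ → ℝ} {p : ENNReal} (hg : AEStronglyMeasurable g ν) :
    MemLp (fun u => g (quantile ν u)) p uniformIoo ↔ MemLp g p ν := by
  rw [← map_quantile (ν := ν)] at hg ⊢
  rw [memLp_map_measure_iff hg aemeasurable_quantile, map_quantile]; rfl

lemma integrable_quantile (hν : Integrable id ν) :
    Integrable (quantile ν) uniformIoo := by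
  simpa [← memLp_one_iff_integrable] using
    (memLp_comp_quantile_iff aestronglyMeasurable_id).2 (memLp_one_iff_integrable.2 hν)

end Quantile

lemma integral_sign_sub_uniformIoo {u : ℝ} (hu : u ∈ Ioo (0 : ℝ) 1) :
    ∫ v, Real.sign (u - v) ∂uniformIoo = 2 * u - 1 := by
  have h : (fun v => Real.sign (u - v)) =
      fun v => (Iio u).indicator 1 v - (Ioi u).indicator 1 v := by
    ext v
    rcases lt_trichotomy v u with h | rfl | h
    · simp [h, h.not_gt, Real.sign_of_pos (sub_pos.2 h)]
    · simp
    · simp [h, h.not_gt, Real.sign_of_neg (sub_neg.2 h)]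
  rw [h, integral_sub ((integrable_const 1).indicator measurableSet_Iio)
    ((integrable_const 1).indicator measurableSet_Ioi), integral_indicator_one measurableSet_Iio,
    integral_indicator_one measurableSet_Ioi, measureReal_def, measureReal_def,
    uniformIoo_Iio hu.2.le, uniformIoo_Ioi hu.1.le, ENNReal.toReal_ofReal hu.1.le,
    ENNReal.toReal_ofReal (sub_nonneg.2 hu.2.le)]
  ring

lemma ae_mem_Ioo_prod_uniformIoo :
    ∀ᵐ z ∂uniformIoo.prod uniformIoo, z ∈ Ioo (0 : ℝ) 1 ×ˢ Ioo 0 1 :=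
  (Measure.ae_prod_mem_iff_ae_ae_mem (measurableSet_Ioo.prod measurableSet_Ioo)).2 <| by
    filter_upwards [ae_mem_Ioo_uniformIoo] with u hu
    filter_upwards [ae_mem_Ioo_uniformIoo] with v hv using ⟨hu, hv⟩

lemma integral_integral_abs_sub_of_monotoneOn {f : ℝ → ℝ} (hf : MonotoneOn f (Ioo 0 1))
    (hfi : Integrable f uniformIoo) :
    ∫ u, ∫ v, |f u - f v| ∂uniformIoo ∂uniformIoo = 2 * ∫ u, (2 * u - 1) * f u ∂uniformIoo := by
  let K : ℝ × ℝ → ℝ := fun z => Real.sign (z.1 - z.2) * f z.1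
  have hK : Integrable K (uniformIoo.prod uniformIoo) :=
    (hfi.comp_fst uniformIoo).bdd_mul (c := 1)
      (measurable_sign.comp (measurable_fst.sub measurable_snd)).aestronglyMeasurable
      (Eventually.of_forall fun z => by
        rcases Real.sign_apply_eq (z.1 - z.2) with h | h | h <;> simp [h])
  have habs : ∀ᵐ z ∂uniformIoo.prod uniformIoo, |f z.1 - f z.2| = K z + K z.swap := by
    filter_upwards [ae_mem_Ioo_prod_uniformIoo] with z ⟨h₁, h₂⟩
    rcases lt_trichotomy z.1 z.2 with h | h | h
    · simp [K, Real.sign_of_neg (sub_neg.2 h), Real.sign_of_pos (sub_pos.2 h),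
        abs_of_nonpos (sub_nonpos.2 (hf h₁ h₂ h.le))]
      ring
    · simp [K, h]
    · simp [K, Real.sign_of_neg (sub_neg.2 h), Real.sign_of_pos (sub_pos.2 h),
        abs_of_nonneg (sub_nonneg.2 (hf h₂ h₁ h.le))]
      ring
  rw [← integral_prod (fun z : ℝ × ℝ => |f z.1 - f z.2|)
      ((hfi.comp_fst _).sub (hfi.comp_snd _)).abs, integral_congr_ae habs,
    integral_add hK (hK.swap : Integrable (fun z => K z.swap) _), integral_prod_swap, ← two_mul,
    integral_prod _ hK]
  congr 1
  refine integral_congr_ae ?_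
  filter_upwards [ae_mem_Ioo_uniformIoo] with u hu
  simp only [K]
  rw [integral_mul_const, integral_sign_sub_uniformIoo hu]

lemma integral_abs_sub_prod_eq_quantile {ν : Measure ℝ} [IsProbabilityMeasure ν]
    (hν : Integrable id ν) :
    ∫ z, |z.1 - z.2| ∂ν.prod ν = 2 * ∫ u, (2 * u - 1) * quantile ν u ∂uniformIoo := by
  have hcont : Continuous fun z : ℝ × ℝ => |z.1 - z.2| := (continuous_fst.sub continuous_snd).abs
  rw [integral_prod (fun z : ℝ × ℝ => |z.1 - z.2|) ((hν.comp_fst ν).sub (hν.comp_snd ν)).abs,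
    ← integral_integral_abs_sub_of_monotoneOn monotoneOn_quantile (integrable_quantile hν),
    ← integral_comp_quantile (ν := ν)
      hcont.stronglyMeasurable.integral_prod_right'.aestronglyMeasurable]
  congr 1 with u
  exact (integral_comp_quantile (ν := ν) (g := fun y => |quantile ν u - y|)
    (by fun_prop : Continuous _).aestronglyMeasurable).symm

lemma integral_two_mul_sub_one_uniformIoo : ∫ u, (2 * u - 1) ∂uniformIoo = 0 := by
  rw [integral_uniformIoo, intervalIntegral.integral_comp_mul_sub (fun t => t) two_ne_zero,
    integral_id]
  norm_num

lemma integral_abs_two_mul_sub_one_rpow {q : ℝ} (hq : 0 ≤ q) :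
    ∫ u, |2 * u - 1| ^ q ∂uniformIoo = 1 / (q + 1) := by
  have hcont : Continuous fun t : ℝ => |t| ^ q := continuous_abs.rpow_const fun _ => Or.inr hq
  have hright : ∫ t in (0 : ℝ)..1, |t| ^ q = 1 / (q + 1) := by
    rw [intervalIntegral.integral_congr (g := fun t => t ^ q) fun t ht => by
      rw [abs_of_nonneg (by simpa using ht.1 : (0 : ℝ) ≤ t)]]
    rw [integral_rpow (Or.inl (by linarith)), one_rpow, zero_rpow (by linarith)]
    ring
  have hleft : ∫ t in (-1 : ℝ)..0, |t| ^ q = 1 / (q + 1) := by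
    have h := intervalIntegral.integral_comp_neg (a := 0) (b := 1) fun t : ℝ => |t| ^ q
    simp only [abs_neg, neg_zero] at h
    rw [← h, hright]
  rw [integral_uniformIoo, intervalIntegral.integral_comp_mul_sub (fun t => |t| ^ q) two_ne_zero,
    ← intervalIntegral.integral_add_adjacent_intervals (b := 0) (hcont.intervalIntegrable _ _)
      (hcont.intervalIntegrable _ _)]
  norm_num [hleft, hright]
  ring

lemma norm_two_mul_sub_one_le : ∀ᵐ u ∂uniformIoo, ‖2 * u - 1‖ ≤ 1 := by
  filter_upwards [ae_mem_Ioo_uniformIoo] with u hu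
  rw [Real.norm_eq_abs, abs_le]
  constructor <;> linarith [hu.1, hu.2]

lemma integral_two_mul_sub_one_mul_sub_const {f : ℝ → ℝ} (hf : Integrable f uniformIoo) (c : ℝ) :
    ∫ u, (2 * u - 1) * (f u - c) ∂uniformIoo = ∫ u, (2 * u - 1) * f u ∂uniformIoo := by
  have hlin : Integrable (fun u : ℝ => 2 * u - 1) uniformIoo :=
    (integrable_const 1).mono' (by fun_prop) norm_two_mul_sub_one_le
  simp_rw [mul_sub]
  rw [integral_sub (hf.bdd_mul (by fun_prop) norm_two_mul_sub_one_le) (hlin.mul_const c),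
    integral_mul_const, integral_two_mul_sub_one_uniformIoo, zero_mul, sub_zero]

lemma integral_two_mul_sub_one_mul_le {p : ℝ} (hp : 1 < p) {g : ℝ → ℝ}
    (hg : MemLp g (ENNReal.ofReal p) uniformIoo) :
    ∫ u, (2 * u - 1) * g u ∂uniformIoo ≤
      (∫ u, |g u| ^ p ∂uniformIoo) ^ (1 / p) * ((p - 1) / (2 * p - 1)) ^ ((p - 1) / p) := by
  have hpq := Real.HolderConjugate.conjExponent hp
  have hlin : MemLp (fun u : ℝ => 2 * u - 1) (ENNReal.ofReal p.conjExponent) uniformIoo :=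
    MemLp.of_bound (by fun_prop) 1 norm_two_mul_sub_one_le
  have hnorm : (∫ u, |2 * u - 1| ^ p.conjExponent ∂uniformIoo) ^ (1 / p.conjExponent) =
      ((p - 1) / (2 * p - 1)) ^ ((p - 1) / p) := by
    have hp₁ : p - 1 ≠ 0 := by linarith
    rw [integral_abs_two_mul_sub_one_rpow hpq.symm.nonneg, Real.conjExponent]
    congr 1
    · field_simp
      ring
    · field_simp
  calc ∫ u, (2 * u - 1) * g u ∂uniformIoo
      ≤ ∫ u, ‖g u‖ * ‖2 * u - 1‖ ∂uniformIoo := by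
        refine (le_abs_self _).trans ((abs_integral_le_integral_abs).trans_eq ?_)
        simp_rw [abs_mul, mul_comm, Real.norm_eq_abs]
    _ ≤ (∫ u, ‖g u‖ ^ p ∂uniformIoo) ^ (1 / p) *
          (∫ u, ‖2 * u - 1‖ ^ p.conjExponent ∂uniformIoo) ^ (1 / p.conjExponent) :=
        integral_mul_norm_le_Lp_mul_Lq hpq hg hlin
    _ = _ := by simp_rw [Real.norm_eq_abs, hnorm]

lemma integral_abs_sub_prod_le {ν : Measure ℝ} [IsProbabilityMeasure ν] {p : ℝ} (hp : 1 < p)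
    {c : ℝ} (hc : MemLp (fun x => x - c) (ENNReal.ofReal p) ν) :
    ∫ z, |z.1 - z.2| ∂ν.prod ν ≤
      2 * (∫ x, |x - c| ^ p ∂ν) ^ (1 / p) * ((p - 1) / (2 * p - 1)) ^ ((p - 1) / p) := by
  have hν : Integrable id ν := by
    refine (integrable_add_const_iff (c := -c)).1 ?_
    simpa [sub_eq_add_neg] using hc.integrable (by simpa using hp.le)
  rw [integral_abs_sub_prod_eq_quantile hν,
    ← integral_two_mul_sub_one_mul_sub_const (integrable_quantile hν) c,
    ← integral_comp_quantile (g := fun x => |x - c| ^ p) (by fun_prop (disch := linarith)),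
    mul_assoc]
  gcongr
  exact integral_two_mul_sub_one_mul_le hp ((memLp_comp_quantile_iff (by fun_prop)).2 hc)

end ProbabilityTheory

lemma MeasureTheory.mul_integral_abs_div_rpow_rpow {α : Type*} [MeasurableSpace α] {μ : Measure α}
    {f : α → ℝ} {σ p : ℝ} (hσ : 0 < σ) (hp : p ≠ 0) :
    σ * (∫ a, |f a / σ| ^ p ∂μ) ^ (1 / p) = (∫ a, |f a| ^ p ∂μ) ^ (1 / p) := by
  simp_rw [abs_div, abs_of_pos hσ, div_rpow (abs_nonneg _) hσ.le, integral_div]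
  rw [div_rpow (integral_nonneg fun _ => by positivity) (by positivity), ← rpow_mul hσ.le,
    mul_one_div_cancel hp, rpow_one, mul_div_cancel₀ _ hσ.ne']

theorem abs_diff_expectation_le_Cp_general
    {Ω : Type*} [MeasurableSpace Ω] (P : Measure Ω) [IsProbabilityMeasure P]
    (X₁ X₂ : Ω → ℝ) (hm₁ : Measurable X₁) (hm₂ : Measurable X₂)
    (hid : P.map X₁ = P.map X₂) (hind : IndepFun X₁ X₂ P)
    (μ₁ σ₁ : ℝ) (hσ₁pos : 0 < σ₁)
    (p : ℝ) (hp : 1 < p)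
    (hLp : MemLp (fun ω => (X₁ ω - μ₁) / σ₁) (ENNReal.ofReal p) P) :
    ∫ ω, |X₁ ω - X₂ ω| ∂P
      ≤ (2 * (∫ ω, |(X₁ ω - μ₁) / σ₁| ^ p ∂P) ^ (1 / p)
          * ((p - 1) / (2 * p - 1)) ^ ((p - 1) / p)) * σ₁ := by
  set ν := P.map X₁
  have : IsProbabilityMeasure ν := Measure.isProbabilityMeasure_map hm₁.aemeasurable
  have hX : MemLp (fun ω => X₁ ω - μ₁) (ENNReal.ofReal p) P := by
    simpa [mul_div_cancel₀ _ hσ₁pos.ne'] using hLp.const_mul σ₁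
  have hpair : P.map (fun ω => (X₁ ω, X₂ ω)) = ν.prod ν := by
    rw [(indepFun_iff_map_prod_eq_prod_map_map hm₁.aemeasurable hm₂.aemeasurable).1 hind, ← hid]
  calc ∫ ω, |X₁ ω - X₂ ω| ∂P = ∫ z, |z.1 - z.2| ∂ν.prod ν := by
        rw [← hpair, integral_map (by fun_prop) (by fun_prop)]
    _ ≤ 2 * (∫ x, |x - μ₁| ^ p ∂ν) ^ (1 / p) * ((p - 1) / (2 * p - 1)) ^ ((p - 1) / p) :=
        integral_abs_sub_prod_le hp ((memLp_map_measure_iff (by fun_prop) hm₁.aemeasurable).2 hX)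
    _ = _ := by
        rw [integral_map hm₁.aemeasurable (by fun_prop (disch := linarith)),
          ← mul_integral_abs_div_rpow_rpow hσ₁pos (by linarith)]
        ring

/-- For i.i.d. random variables `X₁, X₂` with mean `μ₁`, standard deviation `σ₁ > 0`, and
standardized variable `Z₁ = (X₁ − μ₁)/σ₁` having finite `p`-th absolute moment (`p > 1`),
`E|X₁ − X₂| ≤ C_p σ₁` with `C_p = 2 ‖Z₁‖_p ((p−1)/(2p−1))^((p−1)/p)`. -/
theorem abs_diff_expectation_le_Cp
    {Ω : Type*} [MeasurableSpace Ω] (P : Measure Ω) [IsProbabilityMeasure P]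
    (X₁ X₂ : Ω → ℝ) (hm₁ : Measurable X₁) (hm₂ : Measurable X₂)
    (hid : P.map X₁ = P.map X₂) (hind : IndepFun X₁ X₂ P)
    (hL2 : MemLp X₁ 2 P)
    (μ₁ σ₁ : ℝ) (hμ₁ : μ₁ = ∫ ω, X₁ ω ∂P)
    (hσ₁ : σ₁ = Real.sqrt (variance X₁ P)) (hσ₁pos : 0 < σ₁)
    (p : ℝ) (hp : 1 < p)
    (hLp : MemLp (fun ω => (X₁ ω - μ₁) / σ₁) (ENNReal.ofReal p) P) :
    ∫ ω, |X₁ ω - X₂ ω| ∂P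
      ≤ (2 * (∫ ω, |(X₁ ω - μ₁) / σ₁| ^ p ∂P) ^ (1 / p)
          * ((p - 1) / (2 * p - 1)) ^ ((p - 1) / p)) * σ₁ :=
  abs_diff_expectation_le_Cp_general P X₁ X₂ hm₁ hm₂ hid hind μ₁ σ₁ hσ₁pos p hp hLp
end

section
/- Let ρ be a probability measure on ℝ × ℝ that is absolutely continuous with respect to two-dimensional Lebesgue measure, and let f₂ denote a density (with respect to Lebesgue measure on ℝ) of the second marginal of ρ. Let π(x) = condCDF(ρ') x x, where ρ' is the pushforward of ρ under the coordinate swap (so π(x) is the conditional CDF of the first coordinate, given the second coordinate equals x, evaluated at x). Then ∫_ℝ f₂(x)·π(x) dx = ρ({(u, v) : u ≤ v}). Consequently, if R = ρ({(u, v) : u ≤ v}) > 0, the function h(x) = f₂(x)·π(x)/R is a probability density function (nonnegative with total integral 1). -/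
/-!
Disintegrate `ρ.map Prod.swap` along its first marginal, which is the second marginal of `ρ`
and so has density `f₂`: integrating the conditional CDF `a ↦ condCDF _ a (g a)` against the
marginal gives the mass of the region below the graph of `g`, and for `g = id` that region is
the swap of `{u ≤ v}`. Dividing by `R` then normalises the density.
-/

open MeasureTheory ProbabilityTheory

namespace ProbabilityTheory

variable {α : Type*} [MeasurableSpace α] {g : α → ℝ}

lemma toKernel_condCDF_prodMk_preimage_le (ρ : Measure (α × ℝ)) [IsFiniteMeasure ρ] (a : α) :
    (isCondKernelCDF_condCDF ρ).toKernel _ ((), a) (Prod.mk a ⁻¹' {p | p.2 ≤ g p.1})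
      = ENNReal.ofReal (condCDF ρ a (g a)) :=
  IsCondKernelCDF.toKernel_Iic ((), a) (g a)

lemma measurableSet_snd_le_comp_fst (hg : Measurable g) :
    MeasurableSet {p : α × ℝ | p.2 ≤ g p.1} :=
  measurableSet_le measurable_snd (hg.comp measurable_fst)

lemma measurable_condCDF_comp (ρ : Measure (α × ℝ)) [IsFiniteMeasure ρ] (hg : Measurable g) :
    Measurable fun a ↦ condCDF ρ a (g a) := by
  have h := Kernel.measurable_kernel_prodMk_left' (η := (isCondKernelCDF_condCDF ρ).toKernel _)
    (measurableSet_snd_le_comp_fst hg) ()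
  simp only [toKernel_condCDF_prodMk_preimage_le] at h
  simpa only [ENNReal.toReal_ofReal (condCDF_nonneg ρ _ _)] using h.ennreal_toReal

lemma lintegral_condCDF_comp (ρ : Measure (α × ℝ)) [IsFiniteMeasure ρ] (hg : Measurable g) :
    ∫⁻ a, ENNReal.ofReal (condCDF ρ a (g a)) ∂ρ.fst = ρ {p | p.2 ≤ g p.1} := by
  simpa only [toKernel_condCDF_prodMk_preimage_le, Kernel.const_apply] using
    lintegral_toKernel_mem (isCondKernelCDF_condCDF ρ) () (measurableSet_snd_le_comp_fst hg)

lemma integral_condCDF_comp (ρ : Measure (α × ℝ)) [IsFiniteMeasure ρ] (hg : Measurable g) :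
    ∫ a, condCDF ρ a (g a) ∂ρ.fst = ρ.real {p | p.2 ≤ g p.1} := by
  rw [integral_eq_lintegral_of_nonneg_ae (ae_of_all _ fun a ↦ condCDF_nonneg ρ a (g a))
    (measurable_condCDF_comp ρ hg).aestronglyMeasurable, lintegral_condCDF_comp ρ hg,
    measureReal_def]

end ProbabilityTheory

theorem integral_density_mul_condCDF_swap_diag (ρ : Measure (ℝ × ℝ)) [IsFiniteMeasure ρ]
    {f : ℝ → ℝ} (hf_meas : Measurable f) (hf_nonneg : ∀ x, 0 ≤ f x)
    (hf : ρ.map Prod.snd = volume.withDensity fun x ↦ ENNReal.ofReal (f x)) :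
    ∫ x, f x * condCDF (ρ.map Prod.swap) x x = ρ.real {p | p.1 ≤ p.2} :=
  calc ∫ x, f x * condCDF (ρ.map Prod.swap) x x
      = ∫ x, condCDF (ρ.map Prod.swap) x x ∂volume.withDensity fun x ↦ ENNReal.ofReal (f x) := by
        rw [integral_withDensity_eq_integral_toReal_smul hf_meas.ennreal_ofReal
          (ae_of_all _ fun _ ↦ ENNReal.ofReal_lt_top)]
        simp only [ENNReal.toReal_ofReal (hf_nonneg _), smul_eq_mul]
    _ = ∫ x, condCDF (ρ.map Prod.swap) x x ∂(ρ.map Prod.swap).fst := by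
        rw [← hf, Measure.fst_map_swap, Measure.snd]
    _ = (ρ.map Prod.swap).real {p | p.2 ≤ p.1} := integral_condCDF_comp _ measurable_id
    _ = ρ.real {p | p.1 ≤ p.2} :=
        map_measureReal_apply measurable_swap (measurableSet_le measurable_snd measurable_fst)

theorem density_h_is_pdf_general
    (ρ : Measure (ℝ × ℝ)) [IsProbabilityMeasure ρ]
    (f₂ : ℝ → ℝ) (hf₂meas : Measurable f₂) (hf₂nonneg : ∀ x, 0 ≤ f₂ x)
    (hf₂ : ρ.map Prod.snd = volume.withDensity fun x => ENNReal.ofReal (f₂ x)) :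
    (∫ x, f₂ x * condCDF (ρ.map Prod.swap) x x)
        = (ρ {p : ℝ × ℝ | p.1 ≤ p.2}).toReal
    ∧ (0 < (ρ {p : ℝ × ℝ | p.1 ≤ p.2}).toReal →
        (∀ x, 0 ≤ f₂ x * condCDF (ρ.map Prod.swap) x x
            / (ρ {p : ℝ × ℝ | p.1 ≤ p.2}).toReal)
        ∧ ∫ x, f₂ x * condCDF (ρ.map Prod.swap) x x
            / (ρ {p : ℝ × ℝ | p.1 ≤ p.2}).toReal = 1) := by
  have hR := integral_density_mul_condCDF_swap_diag ρ hf₂meas hf₂nonneg hf₂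
  refine ⟨hR, fun hR_pos ↦ ⟨fun x ↦ ?_, ?_⟩⟩
  · exact div_nonneg (mul_nonneg (hf₂nonneg x) (condCDF_nonneg _ x x)) hR_pos.le
  · rw [integral_div, hR, measureReal_def, div_self hR_pos.ne']

/-- If `ρ` is an absolutely continuous probability measure on `ℝ × ℝ` with second-marginal
density `f₂`, and `π(x) = condCDF ρ' x x` (conditional CDF of the first coordinate given the
second equals `x`, evaluated at `x`, where `ρ'` is `ρ` pushed forward by the swap), then
`∫ f₂(x) π(x) dx = ρ{(u,v) : u ≤ v}`, and for `R = ρ{(u,v) : u ≤ v} > 0` the function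
`h(x) = f₂(x) π(x) / R` is a probability density function. -/
theorem density_h_is_pdf
    (ρ : Measure (ℝ × ℝ)) [IsProbabilityMeasure ρ]
    (hac : ρ ≪ (volume : Measure (ℝ × ℝ)))
    (f₂ : ℝ → ℝ) (hf₂meas : Measurable f₂) (hf₂nonneg : ∀ x, 0 ≤ f₂ x)
    (hf₂ : ρ.map Prod.snd = volume.withDensity fun x => ENNReal.ofReal (f₂ x)) :
    (∫ x, f₂ x * condCDF (ρ.map Prod.swap) x x)
        = (ρ {p : ℝ × ℝ | p.1 ≤ p.2}).toReal
    ∧ (0 < (ρ {p : ℝ × ℝ | p.1 ≤ p.2}).toReal →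
        (∀ x, 0 ≤ f₂ x * condCDF (ρ.map Prod.swap) x x
            / (ρ {p : ℝ × ℝ | p.1 ≤ p.2}).toReal)
        ∧ ∫ x, f₂ x * condCDF (ρ.map Prod.swap) x x
            / (ρ {p : ℝ × ℝ | p.1 ≤ p.2}).toReal = 1) :=
  density_h_is_pdf_general ρ f₂ hf₂meas hf₂nonneg hf₂
end

section
/- Let ρ be a probability measure on ℝ × ℝ that is absolutely continuous with respect to two-dimensional Lebesgue measure, with marginal densities f₁ (first coordinate) and f₂ (second coordinate). Define π₁(x) = condCDF(ρ) x x (the conditional CDF of the second coordinate given the first equals x, evaluated at x) and π₂(x) = condCDF(ρ') x x where ρ' is the pushforward of ρ under the coordinate swap. Then the pushforward of ρ under the map (u, v) ↦ max{u, v} is absolutely continuous with density x ↦ f₁(x)·π₁(x) + f₂(x)·π₂(x) with respect to Lebesgue measure on ℝ. -/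
open MeasureTheory ProbabilityTheory Set
open scoped ENNReal

/-! The diagonal is `ρ`-null because `ρ ≪ volume`, so the law of `max u v` is the sum of the laws
of `u` on `{v ≤ u}` and of `v` on `{u ≤ v}`. Disintegrating `ρ = ρ.fst ⊗ₘ (condCDF ρ ·).measure`,
the first marginal of `ρ` restricted to `{v ≤ u}` has density `x ↦ condCDF ρ x x` with respect to
`ρ.fst = f₁ • volume`; the region `{u ≤ v}` is the same computation for the swapped measure. -/

namespace ProbabilityTheory

variable {α : Type*} [MeasurableSpace α]

noncomputable def condCDFKernel (ρ : Measure (α × ℝ)) : Kernel α ℝ :=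
  ⟨fun a ↦ (condCDF ρ a).measure, measurable_measure_condCDF ρ⟩

instance (ρ : Measure (α × ℝ)) : IsMarkovKernel (condCDFKernel ρ) :=
  ⟨fun a ↦ inferInstanceAs (IsProbabilityMeasure (condCDF ρ a).measure)⟩

lemma condCDFKernel_Iic (ρ : Measure (α × ℝ)) (a : α) (x : ℝ) :
    condCDFKernel ρ a (Iic x) = ENNReal.ofReal (condCDF ρ a x) :=
  measure_condCDF_Iic ρ a x

lemma fst_compProd_condCDFKernel (ρ : Measure (α × ℝ)) [IsFiniteMeasure ρ] :
    ρ.fst ⊗ₘ condCDFKernel ρ = ρ := by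
  have h_fst : Kernel.const Unit ρ.fst = (Kernel.const Unit ρ).fst := by
    ext; simp only [Kernel.fst_apply, Measure.fst, Kernel.const_apply]
  -- Mathlib's conditional kernel of `ρ` on `ℝ` is built from the same Stieltjes functions.
  have h_cond : Kernel.prodMkLeft Unit (condCDFKernel ρ)
      = Kernel.condKernelUnitReal (Kernel.const Unit ρ) := rfl
  rw [Measure.compProd, h_fst, h_cond, Kernel.disintegrate]
  simp

lemma measurable_ofReal_condCDF_comp (ρ : Measure (α × ℝ)) {g : α → ℝ} (hg : Measurable g) :
    Measurable fun a ↦ ENNReal.ofReal (condCDF ρ a (g a)) := by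
  simp_rw [← condCDFKernel_Iic]
  exact Kernel.measurable_kernel_prodMk_left
    (measurableSet_le measurable_snd (hg.comp measurable_fst))

lemma setLIntegral_condCDF_comp (ρ : Measure (α × ℝ)) [IsFiniteMeasure ρ] {g : α → ℝ}
    (hg : Measurable g) {s : Set α} (hs : MeasurableSet s) :
    ∫⁻ a in s, ENNReal.ofReal (condCDF ρ a (g a)) ∂ρ.fst = ρ {p | p.1 ∈ s ∧ p.2 ≤ g p.1} := by
  have hE : MeasurableSet {p : α × ℝ | p.1 ∈ s ∧ p.2 ≤ g p.1} :=
    (measurable_fst hs).inter (measurableSet_le measurable_snd (hg.comp measurable_fst))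
  conv_rhs => rw [← fst_compProd_condCDFKernel ρ]
  rw [Measure.compProd_apply hE, ← lintegral_indicator hs]
  refine lintegral_congr fun a ↦ ?_
  by_cases ha : a ∈ s
  · have h_slice : Prod.mk a ⁻¹' {p : α × ℝ | p.1 ∈ s ∧ p.2 ≤ g p.1} = Iic (g a) := by
      ext; simp [ha]
    rw [h_slice, condCDFKernel_Iic, indicator_of_mem ha]
  · have h_slice : Prod.mk a ⁻¹' {p : α × ℝ | p.1 ∈ s ∧ p.2 ≤ g p.1} = ∅ := by
      ext; simp [ha]
    rw [h_slice, indicator_of_notMem ha, measure_empty]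

lemma fst_restrict_snd_le_eq_withDensity (ρ : Measure (α × ℝ)) [IsFiniteMeasure ρ] {g : α → ℝ}
    (hg : Measurable g) :
    (ρ.restrict {p | p.2 ≤ g p.1}).fst
      = ρ.fst.withDensity fun a ↦ ENNReal.ofReal (condCDF ρ a (g a)) := by
  ext s hs
  rw [withDensity_apply _ hs, setLIntegral_condCDF_comp ρ hg hs, Measure.fst_apply hs,
    Measure.restrict_apply (measurable_fst hs)]
  rfl

lemma fst_restrict_snd_le_self_eq_withDensity (ρ : Measure (ℝ × ℝ)) [IsFiniteMeasure ρ]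
    {μ : Measure ℝ} {f : ℝ → ℝ≥0∞} (hf : Measurable f) (hρ : ρ.fst = μ.withDensity f) :
    (ρ.restrict {p | p.2 ≤ p.1}).fst
      = μ.withDensity fun x ↦ f x * ENNReal.ofReal (condCDF ρ x x) := by
  rw [fst_restrict_snd_le_eq_withDensity ρ (g := fun x ↦ x) measurable_id, hρ,
    ← withDensity_mul _ hf (measurable_ofReal_condCDF_comp ρ (g := fun x ↦ x) measurable_id)]
  rfl

end ProbabilityTheory

lemma MeasureTheory.Measure.prod_diagonal_eq_zero {β : Type*} [MeasurableSpace β] [MeasurableEq β]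
    (μ ν : Measure β) [SFinite ν] [NullSingletonClass ν] : μ.prod ν (diagonal β) = 0 := by
  have h_slice (x : β) : Prod.mk x ⁻¹' diagonal β = {x} := by
    ext; simp [eq_comm]
  simp [Measure.prod_apply measurableSet_diagonal, h_slice]

lemma map_max_eq_fst_restrict_add (ρ : Measure (ℝ × ℝ)) (hdiag : ρ (diagonal ℝ) = 0) :
    ρ.map (fun p ↦ max p.1 p.2)
      = (ρ.restrict {p | p.2 ≤ p.1}).fst + ((ρ.map Prod.swap).restrict {p | p.2 ≤ p.1}).fst := by
  have hT : MeasurableSet {p : ℝ × ℝ | p.2 ≤ p.1} := measurableSet_le measurable_snd measurable_fst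
  ext s hs
  rw [Measure.map_apply (measurable_fst.max measurable_snd) hs, Measure.add_apply,
    Measure.fst_apply hs, Measure.fst_apply hs, Measure.restrict_apply (measurable_fst hs),
    Measure.restrict_apply (measurable_fst hs), Measure.map_apply measurable_swap
      ((measurable_fst hs).inter hT)]
  have h_union : (fun p : ℝ × ℝ ↦ max p.1 p.2) ⁻¹' s
      = (Prod.fst ⁻¹' s ∩ {p | p.2 ≤ p.1}) ∪ Prod.swap ⁻¹' (Prod.fst ⁻¹' s ∩ {p | p.2 ≤ p.1}) := by
    ext ⟨x, y⟩
    simp only [mem_preimage, mem_union, mem_inter_iff, mem_ofPred_eq, Prod.fst_swap, Prod.snd_swap]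
    grind
  have h_inter : ρ ((Prod.fst ⁻¹' s ∩ {p | p.2 ≤ p.1})
      ∩ Prod.swap ⁻¹' (Prod.fst ⁻¹' s ∩ {p | p.2 ≤ p.1})) = 0 :=
    measure_mono_null (fun p ⟨⟨_, h₁⟩, _, h₂⟩ ↦ le_antisymm h₂ h₁) hdiag
  rw [h_union, ← measure_union_add_inter _ (measurable_swap ((measurable_fst hs).inter hT)),
    h_inter, add_zero]

/-- The pushforward of an absolutely continuous probability measure `ρ` on `ℝ × ℝ` under
`(u, v) ↦ max u v` has Lebesgue density `x ↦ f₁(x) π₁(x) + f₂(x) π₂(x)`, where `f₁, f₂` are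
the marginal densities and `π₁(x) = condCDF ρ x x`, `π₂(x) = condCDF ρ' x x` with `ρ'` the
swap pushforward of `ρ`. -/
theorem max_pushforward_density
    (ρ : Measure (ℝ × ℝ)) [IsProbabilityMeasure ρ]
    (hac : ρ ≪ (volume : Measure (ℝ × ℝ)))
    (f₁ f₂ : ℝ → ℝ)
    (hf₁meas : Measurable f₁) (hf₂meas : Measurable f₂)
    (hf₁nonneg : ∀ x, 0 ≤ f₁ x) (hf₂nonneg : ∀ x, 0 ≤ f₂ x)
    (hf₁ : ρ.map Prod.fst = volume.withDensity fun x => ENNReal.ofReal (f₁ x))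
    (hf₂ : ρ.map Prod.snd = volume.withDensity fun x => ENNReal.ofReal (f₂ x)) :
    ρ.map (fun p : ℝ × ℝ => max p.1 p.2)
      = volume.withDensity fun x => ENNReal.ofReal
          (f₁ x * condCDF ρ x x + f₂ x * condCDF (ρ.map Prod.swap) x x) := by
  set ρ' := ρ.map Prod.swap
  have hdiag : ρ (diagonal ℝ) = 0 :=
    hac (by rw [Measure.volume_eq_prod]; exact Measure.prod_diagonal_eq_zero _ _)
  have h_below := fst_restrict_snd_le_self_eq_withDensity ρ hf₁meas.ennreal_ofReal hf₁
  have h_above := fst_restrict_snd_le_self_eq_withDensity ρ' hf₂meas.ennreal_ofReal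
    (by rw [Measure.fst_map_swap]; exact hf₂)
  rw [map_max_eq_fst_restrict_add ρ hdiag, h_below, h_above,
    ← withDensity_add_left (f := fun x ↦ ENNReal.ofReal (f₁ x) * ENNReal.ofReal (condCDF ρ x x))
      (hf₁meas.ennreal_ofReal.mul (measurable_ofReal_condCDF_comp ρ measurable_id))]
  congr with x
  rw [Pi.add_apply, ENNReal.ofReal_add (mul_nonneg (hf₁nonneg x) (condCDF_nonneg ρ x x))
      (mul_nonneg (hf₂nonneg x) (condCDF_nonneg ρ' x x)),
    ENNReal.ofReal_mul (hf₁nonneg x), ENNReal.ofReal_mul (hf₂nonneg x)]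
end

section
/- Let Z₁ and Z₂ be independent standard normal random variables (each with law gaussianReal 0 1) on a common probability space, let μ ∈ ℝ, σ > 0, and ρ ∈ [−1, 1], and define X = μ + σ·Z₁ and Y = μ + σ·(ρ·Z₁ + √(1 − ρ²)·Z₂) (so (X, Y) is bivariate normal with common mean μ, common variance σ², and correlation ρ). Then E[|X − Y|] = (2/√π)·σ·√(1 − ρ). -/
/-!
The difference `X - Y = σ ((1 - ρ) Z₁ - √(1 - ρ²) Z₂)` is a centred Gaussian, being a linear
combination of independent Gaussians, with variance `σ² ((1 - ρ)² + 1 - ρ²) = 2σ² (1 - ρ)`.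
A centred Gaussian of variance `v` has mean absolute value `√(2v/π)`, by integrating
`|x| e^{-x²/(2v)}` explicitly.
-/

open MeasureTheory ProbabilityTheory Real Set
open scoped NNReal

theorem integral_Ioi_mul_exp_neg_mul_sq {b : ℝ} (hb : 0 < b) :
    ∫ x in Ioi (0 : ℝ), x * rexp (-b * x ^ 2) = (2 * b)⁻¹ := by
  have h := integral_mul_cexp_neg_mul_sq (b := (b : ℂ)) (by simpa using hb)
  rw [← Complex.ofReal_inj, ← integral_complex_ofReal]
  push_cast
  exact h

theorem integral_abs_mul_exp_neg_mul_sq {b : ℝ} (hb : 0 < b) :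
    ∫ x, |x| * rexp (-b * x ^ 2) = b⁻¹ := by
  have h := integral_comp_abs (f := fun x ↦ x * rexp (-b * x ^ 2))
  simp only [sq_abs] at h
  rw [h, integral_Ioi_mul_exp_neg_mul_sq hb]
  field_simp

theorem integral_abs_gaussianReal (v : ℝ≥0) :
    ∫ x, |x| ∂gaussianReal 0 v = √(2 * v / π) := by
  rcases eq_or_ne v 0 with rfl | hv
  · simp
  have hv' : (0 : ℝ) < v := by positivity
  have hpdf : ∀ x, gaussianPDFReal 0 v x • |x|
      = (√(2 * v * π))⁻¹ * (|x| * rexp (-(2 * (v : ℝ))⁻¹ * x ^ 2)) := fun x ↦ by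
    rw [gaussianPDFReal, smul_eq_mul, sub_zero, neg_mul, ← div_eq_inv_mul, neg_div]
    ring_nf
  simp_rw [integral_gaussianReal_eq_integral_smul hv, hpdf]
  rw [integral_const_mul, integral_abs_mul_exp_neg_mul_sq (by positivity), inv_inv,
    sqrt_mul (by positivity), sqrt_div (by positivity)]
  have h2v := mul_self_sqrt (by positivity : (0 : ℝ) ≤ 2 * v)
  have hπ := sqrt_pos.2 pi_pos
  field_simp
  linarith

lemma hasLaw_const_mul_add_const_mul_gaussianReal {Ω : Type*} [MeasurableSpace Ω]
    {P : Measure Ω} {X Y : Ω → ℝ} {m₁ m₂ : ℝ} {v₁ v₂ : ℝ≥0}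
    (hX : HasLaw X (gaussianReal m₁ v₁) P) (hY : HasLaw Y (gaussianReal m₂ v₂) P)
    (hXY : IndepFun X Y P) (a b : ℝ) :
    HasLaw (fun ω ↦ a * X ω + b * Y ω)
      (gaussianReal (a * m₁ + b * m₂) (a ^ 2 * v₁ + b ^ 2 * v₂).toNNReal) P := by
  have h := (hXY.comp (measurable_const_mul a) (measurable_const_mul b)).hasLaw_fun_add
    (gaussianReal_const_mul hX a) (gaussianReal_const_mul hY b)
  rw [gaussianReal_conv_gaussianReal] at h
  convert h using 2
  rw [← NNReal.coe_inj, Real.coe_toNNReal _ (by positivity)]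
  rfl

theorem bivariate_normal_abs_diff_general
    {Ω : Type*} [MeasurableSpace Ω] (P : Measure Ω)
    (Z₁ Z₂ : Ω → ℝ) (hm₁ : Measurable Z₁) (hm₂ : Measurable Z₂)
    (hZ₁ : P.map Z₁ = gaussianReal 0 1) (hZ₂ : P.map Z₂ = gaussianReal 0 1)
    (hind : IndepFun Z₁ Z₂ P)
    (μ σ ρ : ℝ) (hσ : 0 < σ) (hρ : ρ ∈ Set.Icc (-1 : ℝ) 1) :
    ∫ ω, |(μ + σ * Z₁ ω)
        - (μ + σ * (ρ * Z₁ ω + Real.sqrt (1 - ρ ^ 2) * Z₂ ω))| ∂P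
      = (2 / Real.sqrt Real.pi) * σ * Real.sqrt (1 - ρ) := by
  obtain ⟨hρl, hρu⟩ := hρ
  set s := √(1 - ρ ^ 2)
  have hs : s ^ 2 = 1 - ρ ^ 2 := sq_sqrt (by nlinarith)
  have hW := hasLaw_const_mul_add_const_mul_gaussianReal ⟨hm₁.aemeasurable, hZ₁⟩
    ⟨hm₂.aemeasurable, hZ₂⟩ hind (1 - ρ) (-s)
  rw [mul_zero, mul_zero, add_zero, NNReal.coe_one, mul_one, mul_one, neg_sq, hs,
    show (1 - ρ) ^ 2 + (1 - ρ ^ 2) = 2 * (1 - ρ) by ring] at hW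
  have hdiff : ∀ ω, |(μ + σ * Z₁ ω) - (μ + σ * (ρ * Z₁ ω + s * Z₂ ω))|
      = σ * |(1 - ρ) * Z₁ ω + -s * Z₂ ω| := fun ω ↦ by
    rw [← abs_of_pos hσ, ← abs_mul, abs_of_pos hσ]
    ring_nf
  calc ∫ ω, |(μ + σ * Z₁ ω) - (μ + σ * (ρ * Z₁ ω + s * Z₂ ω))| ∂P
      = σ * √(2 * (2 * (1 - ρ)) / π) := by
        simp_rw [hdiff, integral_const_mul]
        rw [← Function.comp_def (fun x : ℝ ↦ |x|), hW.integral_comp (by fun_prop),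
          integral_abs_gaussianReal, Real.coe_toNNReal _ (by linarith)]
    _ = 2 / √π * σ * √(1 - ρ) := by
        rw [← mul_assoc, show (2 : ℝ) * 2 = 2 ^ 2 by norm_num, sqrt_div' _ pi_pos.le,
          sqrt_mul' _ (by linarith), sqrt_sq zero_le_two]
        ring

/-- For a bivariate normal pair `X = μ + σ Z₁`, `Y = μ + σ(ρ Z₁ + √(1−ρ²) Z₂)` built from
independent standard normals `Z₁, Z₂`, one has `E|X − Y| = (2/√π) σ √(1 − ρ)`. -/
theorem bivariate_normal_abs_diff
    {Ω : Type*} [MeasurableSpace Ω] (P : Measure Ω) [IsProbabilityMeasure P]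
    (Z₁ Z₂ : Ω → ℝ) (hm₁ : Measurable Z₁) (hm₂ : Measurable Z₂)
    (hZ₁ : P.map Z₁ = gaussianReal 0 1) (hZ₂ : P.map Z₂ = gaussianReal 0 1)
    (hind : IndepFun Z₁ Z₂ P)
    (μ σ ρ : ℝ) (hσ : 0 < σ) (hρ : ρ ∈ Set.Icc (-1 : ℝ) 1) :
    ∫ ω, |(μ + σ * Z₁ ω)
        - (μ + σ * (ρ * Z₁ ω + Real.sqrt (1 - ρ ^ 2) * Z₂ ω))| ∂P
      = (2 / Real.sqrt Real.pi) * σ * Real.sqrt (1 - ρ) :=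
  bivariate_normal_abs_diff_general P Z₁ Z₂ hm₁ hm₂ hZ₁ hZ₂ hind μ σ ρ hσ hρ
end

section
/- For all a, b ∈ ℝ, ∫_ℝ φ(x)·Φ(a + b·x) dx = Φ(a/√(1 + b²)), where φ(x) = (1/√(2π))·exp(−x²/2) is the standard normal density and Φ(t) = ∫_{−∞}^{t} φ(s) ds is the standard normal CDF. -/
/-!
For independent standard normal `X` and `Y`, the left-hand side is `P(Y ≤ a + b X) = P(Y - b X ≤ a)`,
and `Y - b X` is centred normal with variance `1 + b²`, i.e. distributed as `√(1 + b²) X`.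
-/

open MeasureTheory Real Set ProbabilityTheory
open scoped NNReal

theorem measureReal_conv_apply {M : Type*} [AddMonoid M] [MeasurableSpace M] [MeasurableAdd₂ M]
    (μ ν : Measure M) [IsFiniteMeasure μ] [IsFiniteMeasure ν] {s : Set M} (hs : MeasurableSet s) :
    (μ ∗ ν).real s = ∫ x, ν.real ((x + ·) ⁻¹' s) ∂μ := by
  rw [← integral_indicator_one hs, integral_conv ((integrable_const 1).indicator hs)]
  congr 1 with x
  rw [← integral_indicator_one (measurable_const_add x hs)]
  rfl

theorem integral_measureReal_Iic_add_mul (μ ν : Measure ℝ) [IsFiniteMeasure μ] [IsFiniteMeasure ν]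
    (a b : ℝ) :
    ∫ x, ν.real (Iic (a + b * x)) ∂μ = (μ.map (-b * ·) ∗ ν).real (Iic a) := by
  have hslice (x : ℝ) : (x + ·) ⁻¹' Iic a = Iic (a - x) := by
    ext y; simp only [mem_preimage, mem_Iic]; constructor <;> intro h <;> linarith
  have hmeas : Measurable fun x ↦ ν.real (Iic (a - x)) :=
    Antitone.measurable fun x y hxy ↦ measureReal_mono (Iic_subset_Iic.2 (sub_le_sub_left hxy a))
  rw [measureReal_conv_apply _ _ measurableSet_Iic]
  simp_rw [hslice]
  rw [integral_map (by fun_prop) hmeas.aestronglyMeasurable]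
  simp_rw [neg_mul, sub_neg_eq_add]

theorem gaussianReal_real_Iic_const_mul {c : ℝ} (hc : 0 < c) (μ : ℝ) (v : ℝ≥0) (t : ℝ) :
    (gaussianReal (c * μ) (.mk (c ^ 2) (sq_nonneg c) * v)).real (Iic t)
      = (gaussianReal μ v).real (Iic (t / c)) := by
  rw [← gaussianReal_map_const_mul, map_measureReal_apply (by fun_prop) measurableSet_Iic]
  congr 1 with x
  simp only [mem_Iic, mem_preimage, le_div_iff₀ hc, mul_comm x]

theorem integral_gaussianReal_real_Iic_add_mul (a b : ℝ) :
    ∫ x, (gaussianReal 0 1).real (Iic (a + b * x)) ∂gaussianReal 0 1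
      = (gaussianReal 0 1).real (Iic (a / √(1 + b ^ 2))) := by
  have hc : 0 < √(1 + b ^ 2) := by positivity
  have hvar : NNReal.mk ((-b) ^ 2) (sq_nonneg _) * 1 + 1
      = .mk (√(1 + b ^ 2) ^ 2) (sq_nonneg _) * 1 := by
    ext
    simp only [NNReal.coe_add, NNReal.coe_mul, NNReal.coe_mk, NNReal.coe_one]
    rw [sq_sqrt (by positivity)]
    ring
  rw [integral_measureReal_Iic_add_mul, gaussianReal_map_const_mul, gaussianReal_conv_gaussianReal,
    hvar, ← gaussianReal_real_Iic_const_mul hc]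
  simp only [mul_zero, add_zero]

theorem gaussianReal_real_eq_setIntegral (μ : ℝ) {v : ℝ≥0} (hv : v ≠ 0) (s : Set ℝ) :
    (gaussianReal μ v).real s = ∫ x in s, gaussianPDFReal μ v x := by
  rw [measureReal_def, gaussianReal_apply_eq_integral μ hv,
    ENNReal.toReal_ofReal (setIntegral_nonneg_of_ae (ae_of_all _ (gaussianPDFReal_nonneg μ v)))]

theorem gaussianPDFReal_zero_one (x : ℝ) :
    gaussianPDFReal 0 1 x = 1 / √(2 * π) * exp (-x ^ 2 / 2) := by
  simp [gaussianPDFReal]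

/-- `∫ φ(x) Φ(a + bx) dx = Φ(a/√(1 + b²))` for the standard normal density `φ` and CDF `Φ`. -/
theorem integral_gaussian_pdf_mul_cdf (a b : ℝ) :
    ∫ x : ℝ, (1 / Real.sqrt (2 * Real.pi) * Real.exp (-x ^ 2 / 2))
        * (∫ s in Set.Iic (a + b * x),
            1 / Real.sqrt (2 * Real.pi) * Real.exp (-s ^ 2 / 2))
      = ∫ s in Set.Iic (a / Real.sqrt (1 + b ^ 2)),
          1 / Real.sqrt (2 * Real.pi) * Real.exp (-s ^ 2 / 2) := by
  simp_rw [← gaussianPDFReal_zero_one, ← gaussianReal_real_eq_setIntegral 0 one_ne_zero,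
    ← smul_eq_mul, ← integral_gaussianReal_eq_integral_smul one_ne_zero]
  exact integral_gaussianReal_real_Iic_add_mul a b
end

section
/- For all a, b ∈ ℝ, ∫_ℝ x·φ(x)·Φ(a + b·x) dx = (b/√(1 + b²))·φ(a/√(1 + b²)), where φ(x) = (1/√(2π))·exp(−x²/2) is the standard normal density and Φ(t) = ∫_{−∞}^{t} φ(s) ds is the standard normal CDF. -/
/-!
Since `φ'(x) = -x φ(x)`, integrating by parts against the bounded function `x ↦ Φ(a + b x)`
(Stein's identity) gives `∫ x φ(x) Φ(a + b x) dx = b ∫ φ(x) φ(a + b x) dx`. Completing the square,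
`x² + (a + b x)² = (1 + b²) (x + a b / (1 + b²))² + a² / (1 + b²)`, so the remaining integrand is
`φ(a / √(1 + b²))` times a Gaussian of variance `1 / (1 + b²)`, whose integral is `1 / √(1 + b²)`.
-/

open MeasureTheory Real

theorem hasDerivAt_setIntegral_Iic {f : ℝ → ℝ} (hf : Integrable f) (hfc : Continuous f) (t : ℝ) :
    HasDerivAt (fun u => ∫ s in Set.Iic u, f s) (f t) t := by
  have hsplit : ∀ u, ∫ s in Set.Iic u, f s = (∫ s in Set.Iic 0, f s) + ∫ s in (0 : ℝ)..u, f s :=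
    fun u => by
      rw [← intervalIntegral.integral_Iic_sub_Iic hf.integrableOn hf.integrableOn]
      ring
  rw [funext hsplit]
  exact (intervalIntegral.integral_hasDerivAt_right hf.intervalIntegrable
    (hfc.stronglyMeasurableAtFilter _ _) hfc.continuousAt).const_add _

namespace StdNormal

noncomputable def pdf (x : ℝ) : ℝ := 1 / √(2 * π) * exp (-x ^ 2 / 2)

noncomputable def cdf (t : ℝ) : ℝ := ∫ s in Set.Iic t, pdf s

lemma pdf_eq_mul_exp_neg_mul_sq (x : ℝ) : pdf x = 1 / √(2 * π) * exp (-(1 / 2) * x ^ 2) := by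
  rw [pdf]; ring_nf

lemma pdf_nonneg (x : ℝ) : 0 ≤ pdf x := by
  rw [pdf]; positivity

lemma pdf_le (x : ℝ) : pdf x ≤ 1 / √(2 * π) := by
  rw [pdf]
  exact mul_le_of_le_one_right (by positivity) (exp_le_one_iff.2 (by nlinarith))

@[fun_prop]
lemma continuous_pdf : Continuous pdf := by
  unfold pdf; fun_prop

lemma integrable_pdf : Integrable pdf := by
  simp_rw [funext pdf_eq_mul_exp_neg_mul_sq]
  exact (integrable_exp_neg_mul_sq (by norm_num)).const_mul _

lemma integral_pdf : ∫ x, pdf x = 1 := by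
  simp_rw [pdf_eq_mul_exp_neg_mul_sq]
  rw [integral_const_mul, integral_gaussian, div_mul_eq_mul_div, one_mul,
    div_eq_one_iff_eq (by positivity)]
  congr 1
  ring

lemma integrable_id_mul_pdf : Integrable fun x => x * pdf x := by
  simp_rw [pdf_eq_mul_exp_neg_mul_sq, mul_left_comm _ (1 / √(2 * π))]
  exact (integrable_mul_exp_neg_mul_sq (by norm_num)).const_mul _

lemma hasDerivAt_pdf (x : ℝ) : HasDerivAt pdf (-(x * pdf x)) x := by
  have h : HasDerivAt (fun x : ℝ => -x ^ 2 / 2) (-x) x := by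
    simpa using ((hasDerivAt_pow 2 x).neg.div_const 2).congr_deriv (by ring)
  exact (h.exp.const_mul (1 / √(2 * π))).congr_deriv (by unfold pdf; ring)

lemma hasDerivAt_cdf (t : ℝ) : HasDerivAt cdf (pdf t) t :=
  hasDerivAt_setIntegral_Iic integrable_pdf continuous_pdf t

lemma cdf_nonneg (t : ℝ) : 0 ≤ cdf t :=
  setIntegral_nonneg measurableSet_Iic fun s _ => pdf_nonneg s

lemma cdf_le_one (t : ℝ) : cdf t ≤ 1 :=
  integral_pdf ▸ setIntegral_le_integral integrable_pdf (.of_forall pdf_nonneg)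

theorem integral_id_mul_pdf_mul_eq_integral_pdf_mul_deriv {F F' : ℝ → ℝ} {C : ℝ}
    (hF : ∀ x, HasDerivAt F (F' x) x) (hFC : ∀ x, |F x| ≤ C)
    (hF' : Integrable fun x => pdf x * F' x) :
    ∫ x, x * pdf x * F x = ∫ x, pdf x * F' x := by
  have hFm : AEStronglyMeasurable F :=
    (continuous_iff_continuousAt.2 fun x => (hF x).continuousAt).aestronglyMeasurable
  have hFb : ∀ᵐ x, ‖F x‖ ≤ C := .of_forall hFC
  rw [integral_mul_deriv_eq_deriv_mul_of_integrable (fun x _ => hasDerivAt_pdf x)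
    (fun x _ => hF x) hF' (integrable_id_mul_pdf.neg.mul_bdd hFm hFb)
    (integrable_pdf.mul_bdd hFm hFb)]
  simp only [neg_mul, integral_neg, neg_neg]

lemma pdf_mul_pdf_affine (a b x : ℝ) :
    pdf x * pdf (a + b * x) = pdf (a / √(1 + b ^ 2)) *
      (1 / √(2 * π) * exp (-((1 + b ^ 2) / 2) * (x + a * b / (1 + b ^ 2)) ^ 2)) := by
  have hs : 0 < 1 + b ^ 2 := by positivity
  simp only [pdf, div_pow, sq_sqrt hs.le]
  rw [mul_mul_mul_comm, mul_mul_mul_comm _ (exp _), ← exp_add, ← exp_add]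
  congr 2
  field_simp
  ring

lemma integral_pdf_mul_pdf_affine (a b : ℝ) :
    ∫ x, pdf x * pdf (a + b * x) = pdf (a / √(1 + b ^ 2)) / √(1 + b ^ 2) := by
  simp_rw [pdf_mul_pdf_affine a b]
  rw [integral_const_mul, integral_const_mul,
    integral_add_right_eq_self (fun y => exp (-((1 + b ^ 2) / 2) * y ^ 2)), integral_gaussian,
    show π / ((1 + b ^ 2) / 2) = 2 * π / (1 + b ^ 2) by field_simp, sqrt_div (by positivity)]
  field_simp

theorem integral_id_mul_pdf_mul_cdf_affine (a b : ℝ) :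
    ∫ x, x * pdf x * cdf (a + b * x) = b / √(1 + b ^ 2) * pdf (a / √(1 + b ^ 2)) := by
  have hF (x : ℝ) : HasDerivAt (fun x => cdf (a + b * x)) (pdf (a + b * x) * b) x :=
    (hasDerivAt_cdf _).comp x
      (((hasDerivAt_id x).const_mul b).const_add a |>.congr_deriv (mul_one b))
  have hF_bound (x : ℝ) : |cdf (a + b * x)| ≤ 1 :=
    abs_le.2 ⟨by linarith [cdf_nonneg (a + b * x)], cdf_le_one _⟩
  have hF' : Integrable fun x => pdf x * (pdf (a + b * x) * b) :=
    integrable_pdf.mul_bdd (c := 1 / √(2 * π) * |b|) (by fun_prop) (.of_forall fun x => by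
      rw [norm_mul, norm_of_nonneg (pdf_nonneg _), norm_eq_abs]
      exact mul_le_mul_of_nonneg_right (pdf_le _) (abs_nonneg b))
  calc ∫ x, x * pdf x * cdf (a + b * x)
      = ∫ x, pdf x * (pdf (a + b * x) * b) :=
        integral_id_mul_pdf_mul_eq_integral_pdf_mul_deriv hF hF_bound hF'
    _ = b / √(1 + b ^ 2) * pdf (a / √(1 + b ^ 2)) := by
      simp_rw [← mul_assoc, integral_mul_const, integral_pdf_mul_pdf_affine]; ring

end StdNormal

/-- `∫ x φ(x) Φ(a + bx) dx = (b/√(1 + b²)) φ(a/√(1 + b²))` for the standard normal density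
`φ` and CDF `Φ`. -/
theorem integral_id_mul_gaussian_pdf_mul_cdf (a b : ℝ) :
    ∫ x : ℝ, x * (1 / Real.sqrt (2 * Real.pi) * Real.exp (-x ^ 2 / 2))
        * (∫ s in Set.Iic (a + b * x),
            1 / Real.sqrt (2 * Real.pi) * Real.exp (-s ^ 2 / 2))
      = (b / Real.sqrt (1 + b ^ 2))
          * (1 / Real.sqrt (2 * Real.pi)
              * Real.exp (-(a / Real.sqrt (1 + b ^ 2)) ^ 2 / 2)) :=
  StdNormal.integral_id_mul_pdf_mul_cdf_affine a b
end
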